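/- Basic inequality for the Lasso yields a cone constraint: suppose L : ℝᵖ → ℝ is convex and differentiable, λ > 0, θ ∈ ℝᵖ has support contained in {1,…,d} (θ_j = 0 for j > d), and θ̂ minimizes Q(β) = L(β) + λ‖β‖₁. Let D = θ̂ − θ. If max_j |∂L/∂β_j(θ)| ≤ λ/2, then Σ_{j>d} |D_j| ≤ 3·Σ_{j≤d} |D_j|. -/

import Mathlib

/-!
With `D = θhat - θ`, `S = {j < d}` and `T` its complement, the chain
`λ (‖D_T‖₁ - ‖D_S‖₁) ≤ λ (‖θhat‖₁ - ‖θ‖₁) ≤ L θ - L θhat ≤ -∇L(θ)·D ≤ (λ/2) ‖D‖₁`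
(sparsity of `θ` and the triangle inequality, minimality of `θhat`, convexity of `L`,
Hölder with the gradient bound) gives `‖D_T‖₁ ≤ 3 ‖D_S‖₁` after dividing by `λ > 0`.
-/

open Finset

/-- On the segment from `x` to `y`, `f` is a convex function of one real variable, whose slope
on `[0, 1]` dominates its derivative at `0`. -/
theorem ConvexOn.hasFDerivAt_apply_sub_le {E : Type*} [NormedAddCommGroup E] [NormedSpace ℝ E]
    {s : Set E} {f : E → ℝ} {f' : E →L[ℝ] ℝ} {x y : E} (hf : ConvexOn ℝ s f) (hx : x ∈ s)
    (hy : y ∈ s) (hfx : HasFDerivAt f f' x) :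
    f' (y - x) ≤ f y - f x := by
  set γ : ℝ →ᵃ[ℝ] E := AffineMap.lineMap x y
  have hderiv : HasDerivAt (f ∘ γ) (f' (y - x)) 0 := by
    refine HasFDerivAt.comp_hasDerivAt (0 : ℝ) ?_ AffineMap.hasDerivAt_lineMap
    simpa [γ] using hfx
  have hslope := (hf.comp_affineMap γ).le_slope_of_hasDerivAt
    (by simpa [γ] using hx) (by simpa [γ] using hy) one_pos hderiv
  simpa [slope_def_field, γ] using hslope

theorem ContinuousLinearMap.abs_apply_le_mul_sum_abs {ι : Type*} [Fintype ι] [DecidableEq ι]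
    (f : (ι → ℝ) →L[ℝ] ℝ) {c : ℝ} (hf : ∀ i, |f (Pi.single i 1)| ≤ c) (v : ι → ℝ) :
    |f v| ≤ c * ∑ i, |v i| := by
  have hexpand : f v = ∑ i, v i * f (Pi.single i 1) := by
    conv_lhs => rw [← univ_sum_single v]
    simp only [map_sum]
    refine sum_congr rfl fun i _ => ?_
    rw [← smul_eq_mul, ← map_smul, ← Pi.single_smul, smul_eq_mul, mul_one]
  calc |f v| ≤ ∑ i, |v i * f (Pi.single i 1)| := hexpand ▸ abs_sum_le_sum_abs _ _
    _ ≤ ∑ i, |v i| * c := by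
        gcongr with i
        rw [abs_mul]
        exact mul_le_mul_of_nonneg_left (hf i) (abs_nonneg _)
    _ = c * ∑ i, |v i| := by rw [mul_sum]; simp only [mul_comm]

theorem sum_compl_abs_sub_sub_sum_abs_sub_le {ι : Type*} [Fintype ι] [DecidableEq ι]
    {s : Finset ι} {θ : ι → ℝ} (hθ : ∀ i ∉ s, θ i = 0) (β : ι → ℝ) :
    ∑ i ∈ sᶜ, |β i - θ i| - ∑ i ∈ s, |β i - θ i| ≤ ∑ i, |β i| - ∑ i, |θ i| := by
  rw [← sum_add_sum_compl s fun i => |β i|, ← sum_add_sum_compl s fun i => |θ i|]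
  have hoff : ∀ i ∈ sᶜ, θ i = 0 := fun i hi => hθ i (mem_compl.mp hi)
  have hoff_sub : ∑ i ∈ sᶜ, |β i - θ i| = ∑ i ∈ sᶜ, |β i| :=
    sum_congr rfl fun i hi => by rw [hoff i hi, sub_zero]
  have hoff_zero : ∑ i ∈ sᶜ, |θ i| = 0 :=
    sum_eq_zero fun i hi => by rw [hoff i hi, abs_zero]
  have hon : ∑ i ∈ s, |θ i| ≤ ∑ i ∈ s, |β i| + ∑ i ∈ s, |β i - θ i| := by
    rw [← sum_add_distrib]
    gcongr with i
    simpa using abs_sub (β i) (β i - θ i)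
  linarith

/-- the Lasso basic inequality yields the cone constraint
Σ_{j>d} |D_j| ≤ 3 Σ_{j≤d} |D_j| (indices 0-based: j < d are the "relevant" ones). -/
theorem stmt_9 (p d : ℕ) (L : (Fin p → ℝ) → ℝ)
    (hconv : ConvexOn ℝ Set.univ L) (hdiff : Differentiable ℝ L)
    (lam : ℝ) (hlam : 0 < lam)
    (θ θhat : Fin p → ℝ)
    (hsupp : ∀ j : Fin p, d ≤ (j : ℕ) → θ j = 0)
    (hmin : ∀ β, L θhat + lam * ∑ j, |θhat j| ≤ L β + lam * ∑ j, |β j|)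
    (hgrad : ∀ j : Fin p, |fderiv ℝ L θ (Pi.single j 1)| ≤ lam / 2) :
    ∑ j ∈ Finset.univ.filter (fun j : Fin p => d ≤ (j : ℕ)), |θhat j - θ j| ≤
      3 * ∑ j ∈ Finset.univ.filter (fun j : Fin p => (j : ℕ) < d), |θhat j - θ j| := by
  set S := univ.filter fun j : Fin p => (j : ℕ) < d
  have hcompl : Sᶜ = univ.filter fun j : Fin p => d ≤ (j : ℕ) := by
    simp only [S, compl_filter, not_lt]
  have hgradient : fderiv ℝ L θ (θhat - θ) ≤ L θhat - L θ :=
    hconv.hasFDerivAt_apply_sub_le trivial trivial (hdiff θ).hasFDerivAt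
  have hholder := (fderiv ℝ L θ).abs_apply_le_mul_sum_abs hgrad (θhat - θ)
  simp only [Pi.sub_apply] at hholder
  have hl1 := sum_compl_abs_sub_sub_sum_abs_sub_le (s := S)
    (fun j hj => hsupp j (by simpa [S] using hj)) θhat
  have hsplit := (sum_add_sum_compl S fun j => |θhat j - θ j|).symm
  rw [hcompl] at hl1 hsplit
  have hbasic := hmin θ
  nlinarith [(abs_le.mp hholder).1]
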